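/- Let (X_i, Y_i), i ≥ 1, be i.i.d. copies of (X, Y) with E[|Y|] finite, and let w : [0,1] → ℝ be continuous. With F̂_n the modified empirical cdf of Y_1,...,Y_n, the average (1/n) Σ_{k=1}^n Y_k · w(F̂_n(Y_k)) converges almost surely to E[Y · w(F_Y(Y))] as n → ∞. -/

import Mathlib

/-!
Let `F` be the cdf of `Y` and `F̂ₙ` the modified empirical cdf. At the countably many quantiles
`q = F⁻¹(j/m)` the strong law gives, almost surely, `F̂ₙ(q) → F(q)` and `F̂ₙ(q⁻) → F(q⁻)`; since
`F̂ₙ` and `F` are monotone and consecutive quantiles are `1/m` apart in `F`, this forces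
`sup_y |F̂ₙ(y) - F(y)| → 0` (Glivenko–Cantelli). Uniform continuity of `w` on `[0,1]` then bounds
the error `(1/n) Σ Y_k (w(F̂ₙ(Y_k)) - w(F(Y_k)))` by `(1/n) Σ |Y_k|` times a quantity tending to
`0`, and the strong law applies to `(1/n) Σ Y_k w(F(Y_k))` and `(1/n) Σ |Y_k|`.
-/

open MeasureTheory ProbabilityTheory Filter Set Topology

/-- The cumulative distribution function of a real random variable. -/
noncomputable def rvCdf {Ω : Type*} [MeasureSpace Ω] (Y : Ω → ℝ) (y : ℝ) : ℝ :=
  (ℙ {ω | Y ω ≤ y}).toReal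

/-- The modified empirical distribution function with jumps of size `1/(n+1)`. -/
noncomputable def empCdf {Ω : Type*} (Y : ℕ → Ω → ℝ) (n : ℕ) (ω : Ω) (y : ℝ) : ℝ :=
  (∑ k ∈ Finset.range n, if Y k ω ≤ y then (1 : ℝ) else 0) / ((n : ℝ) + 1)

lemma tendsto_div_add_one_of_tendsto_div {s : ℕ → ℝ} {L : ℝ}
    (h : Tendsto (fun n => s n / n) atTop (𝓝 L)) :
    Tendsto (fun n => s n / ((n : ℝ) + 1)) atTop (𝓝 L) := by
  have := h.mul (tendsto_natCast_div_add_atTop (1 : ℝ))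
  rw [mul_one] at this
  refine this.congr' ?_
  filter_upwards [eventually_ne_atTop 0] with n hn
  field_simp

lemma tendsto_average_mul_of_tendstoUniformly {x : ℕ → ℝ} {g : ℕ → ℝ → ℝ} {f : ℝ → ℝ} {L A : ℝ}
    (hg : TendstoUniformly g f atTop)
    (hf : Tendsto (fun n : ℕ => (∑ k ∈ Finset.range n, x k * f (x k)) / n) atTop (𝓝 L))
    (habs : Tendsto (fun n : ℕ => (∑ k ∈ Finset.range n, |x k|) / n) atTop (𝓝 A)) :
    Tendsto (fun n : ℕ => (∑ k ∈ Finset.range n, x k * g n (x k)) / n) atTop (𝓝 L) := by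
  have hA : 0 ≤ A := ge_of_tendsto' habs fun n => by positivity
  have herr : Tendsto (fun n : ℕ => (∑ k ∈ Finset.range n, x k * (g n (x k) - f (x k))) / n)
      atTop (𝓝 0) := by
    refine Metric.tendsto_nhds.2 fun ε hε => ?_
    have hδ : 0 < ε / (A + 1) := by positivity
    filter_upwards [habs.eventually (eventually_lt_nhds (lt_add_one A)),
      Metric.tendstoUniformly_iff.1 hg _ hδ] with n hn hgn
    rw [Real.dist_eq, sub_zero, abs_div, Nat.abs_cast]
    calc |∑ k ∈ Finset.range n, x k * (g n (x k) - f (x k))| / n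
        ≤ (∑ k ∈ Finset.range n, |x k| * (ε / (A + 1))) / n := by
          gcongr
          refine (Finset.abs_sum_le_sum_abs _ _).trans (Finset.sum_le_sum fun k _ => ?_)
          rw [abs_mul, abs_sub_comm]
          exact mul_le_mul_of_nonneg_left (hgn (x k)).le (abs_nonneg _)
      _ = (∑ k ∈ Finset.range n, |x k|) / n * (ε / (A + 1)) := by
          rw [← Finset.sum_mul, mul_div_right_comm]
      _ < (A + 1) * (ε / (A + 1)) := mul_lt_mul_of_pos_right hn hδ
      _ = ε := by field_simp
  have := hf.add herr
  rw [add_zero] at this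
  refine this.congr fun n => ?_
  rw [← add_div, ← Finset.sum_add_distrib]
  simp only [mul_sub, add_sub_cancel]

section Bracketing

/- `Fm` and `Gm` stand for the left limits of `F` and `G`, and `q j` for a `j/m`-quantile of `F`. -/
variable {F Fm G Gm : ℝ → ℝ} {m : ℕ} {q : ℕ → ℝ} {ε : ℝ}

lemma sub_le_of_grid (hm : 0 < m) (hε : 0 ≤ ε) (hF : Monotone F) (hF₀ : ∀ y, 0 ≤ F y)
    (hG₁ : ∀ y, G y ≤ 1) (hGm : ∀ y z, y < z → G y ≤ Gm z)
    (hq : ∀ j, 0 < j → j < m → Fm (q j) ≤ j / m ∧ (j : ℝ) / m ≤ F (q j))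
    (hGq : ∀ j, 0 < j → j < m → |Gm (q j) - Fm (q j)| ≤ ε) (y : ℝ) :
    G y - F y ≤ ε + 1 / m := by
  -- with `j = ⌊m F(y)⌋`, the grid point `q (j + 1)` lies to the right of `y`
  have hm' : (0 : ℝ) < m := by exact_mod_cast hm
  set j := ⌊m * F y⌋₊
  have hj : (j : ℝ) / m ≤ F y := by
    rw [div_le_iff₀' hm']; exact Nat.floor_le (mul_nonneg hm'.le (hF₀ y))
  have hj' : F y < (j + 1 : ℝ) / m := by
    rw [lt_div_iff₀' hm']; exact Nat.lt_floor_add_one _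
  have hsplit : (j + 1 : ℝ) / m = j / m + 1 / m := add_div _ _ _
  by_cases hjm : j + 1 < m
  · obtain ⟨hFm_j, hF_j⟩ := hq (j + 1) j.succ_pos hjm
    push_cast at hFm_j hF_j
    have hyq : y < q (j + 1) := hF.reflect_lt (hj'.trans_le hF_j)
    have := (abs_le.1 (hGq (j + 1) j.succ_pos hjm)).2
    linarith [hGm _ _ hyq]
  · have : (m : ℝ) ≤ j + 1 := by exact_mod_cast not_lt.1 hjm
    have : (1 : ℝ) ≤ (j + 1 : ℝ) / m := by rw [le_div_iff₀ hm']; linarith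
    linarith [hG₁ y]

lemma sub_le_of_grid' (hm : 0 < m) (hε : 0 ≤ ε) (hF₁ : ∀ y, F y ≤ 1)
    (hFm : ∀ y z, y < z → F y ≤ Fm z) (hG : Monotone G) (hG₀ : ∀ y, 0 ≤ G y)
    (hq : ∀ j, 0 < j → j < m → Fm (q j) ≤ j / m ∧ (j : ℝ) / m ≤ F (q j))
    (hGq : ∀ j, 0 < j → j < m → |G (q j) - F (q j)| ≤ ε) (y : ℝ) :
    F y - G y ≤ ε + 1 / m := by
  -- with `c = ⌈m F(y)⌉`, the grid point `q (c - 1)` lies to the left of `y`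
  have hm' : (0 : ℝ) < m := by exact_mod_cast hm
  set c := ⌈m * F y⌉₊
  have hc : F y ≤ (c : ℝ) / m := by
    rw [le_div_iff₀' hm']; exact Nat.le_ceil _
  have hcm : c ≤ m := Nat.ceil_le.2 (by nlinarith [hF₁ y])
  by_cases hc1 : 1 < c
  · set i := c - 1
    have hi : 0 < i := Nat.sub_pos_of_lt hc1
    have him : i < m := by omega
    obtain ⟨hFm_i, hF_i⟩ := hq i hi him
    have hiF : (i : ℝ) / m < F y := by
      rw [div_lt_iff₀' hm']; exact Nat.lt_ceil.1 (Nat.sub_lt (by omega) one_pos)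
    have hqy : q i ≤ y := le_of_not_gt fun hyq => (hFm_i.trans_lt hiF).not_ge (hFm _ _ hyq)
    have hsplit : (c : ℝ) / m = i / m + 1 / m := by
      rw [Nat.cast_sub hc1.le, Nat.cast_one]; ring
    have := (abs_le.1 (hGq i hi him)).1
    linarith [hG hqy]
  · have : (c : ℝ) ≤ 1 := by exact_mod_cast not_lt.1 hc1
    have : (c : ℝ) / m ≤ 1 / m := by gcongr
    linarith [hG₀ y]

lemma abs_sub_le_of_grid (hm : 0 < m) (hε : 0 ≤ ε)
    (hF : Monotone F) (hF₀₁ : ∀ y, F y ∈ Icc 0 1) (hFm : ∀ y z, y < z → F y ≤ Fm z)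
    (hG : Monotone G) (hG₀₁ : ∀ y, G y ∈ Icc 0 1) (hGm : ∀ y z, y < z → G y ≤ Gm z)
    (hq : ∀ j, 0 < j → j < m → Fm (q j) ≤ j / m ∧ (j : ℝ) / m ≤ F (q j))
    (hGq : ∀ j, 0 < j → j < m → |G (q j) - F (q j)| ≤ ε ∧ |Gm (q j) - Fm (q j)| ≤ ε) (y : ℝ) :
    |G y - F y| ≤ ε + 1 / m :=
  abs_sub_le_iff.2
    ⟨sub_le_of_grid hm hε hF (fun y => (hF₀₁ y).1) (fun y => (hG₀₁ y).2) hGm hq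
      (fun j hj hjm => (hGq j hj hjm).2) y,
    sub_le_of_grid' hm hε (fun y => (hF₀₁ y).2) hFm hG (fun y => (hG₀₁ y).1) hq
      (fun j hj hjm => (hGq j hj hjm).1) y⟩

end Bracketing

noncomputable def quantile (μ : Measure ℝ) (t : ℝ) : ℝ := sInf {y | t ≤ cdf μ y}

section Quantile

variable (μ : Measure ℝ) {t : ℝ}

lemma le_cdf_quantile (ht : t < 1) : t ≤ cdf μ (quantile μ t) := by
  have hne : {y | t ≤ cdf μ y}.Nonempty :=
    ((tendsto_cdf_atTop μ).eventually (eventually_ge_nhds ht)).exists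
  refine ge_of_tendsto (((cdf μ).right_continuous _).mono Ioi_subset_Ici_self) ?_
  filter_upwards [self_mem_nhdsWithin] with z hz
  obtain ⟨s, hs, hsz⟩ := exists_lt_of_csInf_lt hne hz
  exact hs.trans (monotone_cdf μ hsz.le)

lemma measureReal_Iio_eq_leftLim_cdf [IsProbabilityMeasure μ] (x : ℝ) :
    μ.real (Iio x) = Function.leftLim (cdf μ) x := by
  have h := (cdf μ).measure_Iio (tendsto_cdf_atBot μ) x
  rw [measure_cdf, sub_zero] at h
  rw [measureReal_def, h, ENNReal.toReal_ofReal]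
  exact (cdf_nonneg μ (x - 1)).trans ((monotone_cdf μ).le_leftLim (sub_one_lt x))

lemma measureReal_Iio_quantile_le [IsProbabilityMeasure μ] (ht : 0 < t) :
    μ.real (Iio (quantile μ t)) ≤ t := by
  have hbdd : BddBelow {y | t ≤ cdf μ y} := by
    obtain ⟨y₀, hy₀⟩ := ((tendsto_cdf_atBot μ).eventually (eventually_lt_nhds ht)).exists
    exact ⟨y₀, fun y hy => le_of_not_gt fun hyy₀ => (hy.trans (monotone_cdf μ hyy₀.le)).not_gt hy₀⟩
  rw [measureReal_Iio_eq_leftLim_cdf]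
  refine le_of_tendsto ((monotone_cdf μ).tendsto_leftLim _) ?_
  filter_upwards [self_mem_nhdsWithin] with y hy
  exact le_of_lt (lt_of_not_ge fun h => (csInf_le hbdd h).not_gt hy)

theorem tendstoUniformly_cdf_of_tendsto_quantile [IsProbabilityMeasure μ] {G Gm : ℕ → ℝ → ℝ}
    (hG : ∀ n, Monotone (G n)) (hG₀₁ : ∀ n y, G n y ∈ Icc 0 1)
    (hGm : ∀ n y z, y < z → G n y ≤ Gm n z)
    (hlim : ∀ j m : ℕ,
      Tendsto (fun n => G n (quantile μ (j / m))) atTop (𝓝 (cdf μ (quantile μ (j / m)))) ∧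
      Tendsto (fun n => Gm n (quantile μ (j / m))) atTop (𝓝 (μ.real (Iio (quantile μ (j / m)))))) :
    TendstoUniformly G (cdf μ) atTop := by
  refine Metric.tendstoUniformly_iff.2 fun ε hε => ?_
  obtain ⟨m', hm'⟩ := exists_nat_one_div_lt (half_pos hε)
  set m := m' + 1 with hm_def
  have hm : 1 / (m : ℝ) < ε / 2 := by rw [hm_def, Nat.cast_succ]; exact hm'
  have hm₀ : (0 : ℝ) < m := Nat.cast_pos.2 m'.succ_pos
  set q : ℕ → ℝ := fun j => quantile μ (j / m)
  have hq : ∀ j, 0 < j → j < m → μ.real (Iio (q j)) ≤ j / m ∧ (j : ℝ) / m ≤ cdf μ (q j) :=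
    fun j hj hjm => ⟨measureReal_Iio_quantile_le μ (div_pos (Nat.cast_pos.2 hj) hm₀),
      le_cdf_quantile μ ((div_lt_one hm₀).2 (Nat.cast_lt.2 hjm))⟩
  have hev : ∀ᶠ n in atTop, ∀ j ∈ Finset.range m,
      |G n (q j) - cdf μ (q j)| ≤ ε / 2 ∧ |Gm n (q j) - μ.real (Iio (q j))| ≤ ε / 2 := by
    refine (eventually_all_finset _).2 fun j _ => ?_
    filter_upwards [Metric.tendsto_nhds.1 (hlim j m).1 _ (half_pos hε),
      Metric.tendsto_nhds.1 (hlim j m).2 _ (half_pos hε)] with n h₁ h₂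
    exact ⟨h₁.le, h₂.le⟩
  filter_upwards [hev] with n hn y
  have := abs_sub_le_of_grid m'.succ_pos (half_pos hε).le (monotone_cdf μ)
    (fun y => ⟨cdf_nonneg μ y, cdf_le_one μ y⟩)
    (fun y z hyz => (cdf_eq_real μ y).trans_le (measureReal_mono (Iic_subset_Iio.2 hyz)))
    (hG n) (hG₀₁ n) (hGm n) hq (fun j _ hjm => hn j (Finset.mem_range.2 hjm)) y
  rw [dist_comm, Real.dist_eq]
  linarith

end Quantile

section Empirical

variable {Ω : Type*} {mΩ : MeasurableSpace Ω} {μ : Measure Ω}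

lemma ae_tendsto_average_comp {E : Type*} [MeasurableSpace E] {Z : ℕ → Ω → E}
    (hindep : iIndepFun Z μ) (hident : ∀ k, IdentDistrib (Z k) (Z 0) μ μ)
    {φ : E → ℝ} (hφ : Measurable φ) (hint : Integrable (fun ω => φ (Z 0 ω)) μ) :
    ∀ᵐ ω ∂μ, Tendsto (fun n : ℕ => (∑ k ∈ Finset.range n, φ (Z k ω)) / n) atTop
      (𝓝 (∫ ω, φ (Z 0 ω) ∂μ)) :=
  strong_law_ae_real (fun k ω => φ (Z k ω)) hint
    (fun _ _ hij => (hindep.indepFun hij).comp hφ hφ) (fun k => (hident k).comp hφ)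

noncomputable def empFreq (Y : ℕ → Ω → ℝ) (n : ℕ) (ω : Ω) (s : Set ℝ) : ℝ :=
  (∑ k ∈ Finset.range n, s.indicator 1 (Y k ω)) / ((n : ℝ) + 1)

variable {Y : ℕ → Ω → ℝ} {n : ℕ} {ω : Ω}

lemma empCdf_eq_empFreq (y : ℝ) : empCdf Y n ω y = empFreq Y n ω (Iic y) := by
  simp only [empCdf, empFreq, indicator_apply, mem_Iic, Pi.one_apply]

lemma empFreq_nonneg (s : Set ℝ) : 0 ≤ empFreq Y n ω s :=
  div_nonneg (Finset.sum_nonneg fun _ _ => s.indicator_nonneg (fun _ _ => zero_le_one) _)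
    (by positivity)

lemma empFreq_le_one (s : Set ℝ) : empFreq Y n ω s ≤ 1 := by
  rw [empFreq, div_le_one (by positivity)]
  calc ∑ k ∈ Finset.range n, s.indicator 1 (Y k ω)
      ≤ ∑ k ∈ Finset.range n, (1 : ℝ) :=
        Finset.sum_le_sum fun k _ => s.indicator_le_self' (fun _ _ => zero_le_one' ℝ) _
    _ ≤ n + 1 := by simp

lemma empFreq_mono {s t : Set ℝ} (hst : s ⊆ t) : empFreq Y n ω s ≤ empFreq Y n ω t := by
  unfold empFreq
  gcongr
  exact zero_le_one

lemma empCdf_mem_Icc (y : ℝ) : empCdf Y n ω y ∈ Icc 0 1 := by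
  rw [empCdf_eq_empFreq]
  exact ⟨empFreq_nonneg _, empFreq_le_one _⟩

lemma empCdf_mono : Monotone (empCdf Y n ω) := fun a b hab => by
  simp only [empCdf_eq_empFreq]
  exact empFreq_mono (Iic_subset_Iic.2 hab)

lemma ae_tendsto_empFreq [IsFiniteMeasure μ] (hindep : iIndepFun Y μ)
    (hident : ∀ k, IdentDistrib (Y k) (Y 0) μ μ) {s : Set ℝ} (hs : MeasurableSet s) :
    ∀ᵐ ω ∂μ, Tendsto (fun n => empFreq Y n ω s) atTop (𝓝 ((μ.map (Y 0)).real s)) := by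
  have hY₀ : AEMeasurable (Y 0) μ := (hident 0).aemeasurable_snd
  have hφ : Measurable (s.indicator (1 : ℝ → ℝ)) := measurable_one.indicator hs
  have hint : Integrable (fun ω => s.indicator (1 : ℝ → ℝ) (Y 0 ω)) μ :=
    ((integrable_const (1 : ℝ)).indicator hs).comp_aemeasurable hY₀
  have hlim : ∫ ω, s.indicator (1 : ℝ → ℝ) (Y 0 ω) ∂μ = (μ.map (Y 0)).real s := by
    rw [← integral_map hY₀ hφ.aestronglyMeasurable, integral_indicator_one hs]
  filter_upwards [ae_tendsto_average_comp hindep hident hφ hint] with ω hω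
  rw [← hlim]
  exact tendsto_div_add_one_of_tendsto_div hω

theorem ae_tendstoUniformly_empCdf [IsProbabilityMeasure μ] (hindep : iIndepFun Y μ)
    (hident : ∀ k, IdentDistrib (Y k) (Y 0) μ μ) :
    ∀ᵐ ω ∂μ, TendstoUniformly (fun n => empCdf Y n ω) (cdf (μ.map (Y 0))) atTop := by
  set ν := μ.map (Y 0)
  have : IsProbabilityMeasure ν := Measure.isProbabilityMeasure_map (hident 0).aemeasurable_snd
  filter_upwards [ae_all_iff.2 fun j : ℕ => ae_all_iff.2 fun m : ℕ =>
    (ae_tendsto_empFreq hindep hident (s := Iic (quantile ν (j / m))) measurableSet_Iic).and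
      (ae_tendsto_empFreq hindep hident (s := Iio (quantile ν (j / m))) measurableSet_Iio)]
    with ω hω
  refine tendstoUniformly_cdf_of_tendsto_quantile ν (Gm := fun n y => empFreq Y n ω (Iio y))
    (fun _ => empCdf_mono) (fun _ => empCdf_mem_Icc) (fun n y z hyz => ?_) fun j m => ?_
  · rw [empCdf_eq_empFreq]
    exact empFreq_mono (Iic_subset_Iio.2 hyz)
  · simp only [empCdf_eq_empFreq, cdf_eq_real]
    exact hω j m

end Empirical

lemma rvCdf_eq_cdf_map {Ω : Type*} [MeasureSpace Ω] [IsProbabilityMeasure (ℙ : Measure Ω)]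
    {Y : Ω → ℝ} (hY : AEMeasurable Y) : rvCdf Y = cdf (Measure.map Y ℙ) := by
  have : IsProbabilityMeasure (Measure.map Y ℙ) := Measure.isProbabilityMeasure_map hY
  ext y
  rw [rvCdf, cdf_eq_real, measureReal_def, Measure.map_apply_of_aemeasurable hY measurableSet_Iic]
  rfl

theorem stmt_4_general {Ω : Type*} [MeasureSpace Ω] [IsProbabilityMeasure (ℙ : Measure Ω)]
    (X Y : ℕ → Ω → ℝ)
    (hindep : iIndepFun (fun k ω => (X k ω, Y k ω)) ℙ)
    (hident : ∀ k, IdentDistrib (fun ω => (X k ω, Y k ω)) (fun ω => (X 0 ω, Y 0 ω)) ℙ ℙ)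
    (hYint : Integrable (Y 0))
    (w : ℝ → ℝ) (hw : ContinuousOn w (Icc 0 1)) :
    ∀ᵐ ω ∂ℙ, Tendsto
      (fun n => (∑ k ∈ Finset.range n, Y k ω * w (empCdf Y n ω (Y k ω))) / (n : ℝ))
      atTop (𝓝 (∫ ω, Y 0 ω * w (rvCdf (Y 0) (Y 0 ω)))) := by
  have hYindep : iIndepFun Y ℙ := hindep.comp (fun _ => Prod.snd) fun _ => measurable_snd
  have hYident : ∀ k, IdentDistrib (Y k) (Y 0) ℙ ℙ := fun k => (hident k).comp measurable_snd
  rw [rvCdf_eq_cdf_map hYint.aemeasurable]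
  set F := cdf (Measure.map (Y 0) ℙ)
  have hF : ∀ y, F y ∈ Icc (0 : ℝ) 1 := fun y => ⟨cdf_nonneg _ y, cdf_le_one _ y⟩
  have hwF : Measurable fun y => w (F y) :=
    hw.domRestrict.measurable.comp ((monotone_cdf _).measurable.subtype_mk (h := hF))
  obtain ⟨M, hM⟩ := isCompact_Icc.exists_bound_of_continuousOn hw
  have hint : Integrable fun ω => Y 0 ω * w (F (Y 0 ω)) :=
    hYint.mul_bdd (hwF.comp_aemeasurable hYint.aemeasurable).aestronglyMeasurable
      (ae_of_all _ fun ω => hM _ (hF _))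
  have hmain := ae_tendsto_average_comp (φ := fun y => y * w (F y)) hYindep hYident
    (measurable_id.mul hwF) hint
  have habs := ae_tendsto_average_comp (φ := fun y => |y|) hYindep hYident measurable_id.abs
    hYint.abs
  filter_upwards [ae_tendstoUniformly_empCdf hYindep hYident, hmain, habs] with ω hGC hmain habs
  exact tendsto_average_mul_of_tendstoUniformly (g := fun n y => w (empCdf Y n ω y))
    ((isCompact_Icc.uniformContinuousOn_of_continuous hw).comp_tendstoUniformly
      (fun _ _ => empCdf_mem_Icc _) hF hGC) hmain habs

/-- For i.i.d. pairs `(X_k, Y_k)` with `E[|Y|]` finite and `w` continuous on `[0,1]`,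
the average `(1/n) Σ Y_k · w(F̂_n(Y_k))` converges a.s. to `E[Y · w(F_Y(Y))]`. -/
theorem stmt_4 {Ω : Type*} [MeasureSpace Ω] [IsProbabilityMeasure (ℙ : Measure Ω)]
    (X Y : ℕ → Ω → ℝ) (hmeas : ∀ k, Measurable fun ω => (X k ω, Y k ω))
    (hindep : iIndepFun (fun k ω => (X k ω, Y k ω)) ℙ)
    (hident : ∀ k, IdentDistrib (fun ω => (X k ω, Y k ω)) (fun ω => (X 0 ω, Y 0 ω)) ℙ ℙ)
    (hYint : Integrable (Y 0))
    (w : ℝ → ℝ) (hw : ContinuousOn w (Icc 0 1)) :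
    ∀ᵐ ω ∂ℙ, Tendsto
      (fun n => (∑ k ∈ Finset.range n, Y k ω * w (empCdf Y n ω (Y k ω))) / (n : ℝ))
      atTop (𝓝 (∫ ω, Y 0 ω * w (rvCdf (Y 0) (Y 0 ω)))) :=
  stmt_4_general X Y hindep hident hYint w hw
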